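/- arXiv:1407.0420 — 4 statements merged into one kernel-verified Lean document; each statement's English description precedes it below -/
import Mathlib

section
/- Let (W, A, π) be a linear bottleneck game on n agents and m tasks, let c be primal-feasible and γ be dual-feasible with equal objective values Σ_j c_j·π_j = Σ_i W_i·γ_i. Fix any set of agents S ⊆ Fin n, any set of tasks D ⊆ Fin m (the tasks fully abandoned by the deviating set S), and any withdrawal amounts z : Fin m → ℝ with 0 ≤ z_j ≤ c_j for all j ∉ D. Put ν_i = Σ_{j ∈ D with i ∈ A j} c_j and Z_i = Σ_{j ∉ D with i ∈ A j} z_j. Then for every c' : Fin m → ℝ with c'_j ≥ 0 for all j, c'_j = 0 whenever A j is not a subset of S, and Σ_{j : i ∈ A j} c'_j ≤ ν_i + Z_i for every i ∈ S, one has Σ_j c'_j·π_j − Σ_{j ∉ D} z_j·π_j ≤ Σ_{i ∈ S} γ_i·(Σ_{j : i ∈ A j} c_j). (This is the core inequality showing that, under the optimistic arbitration function, no coalition S can profitably deviate from the outcome induced by optimal primal and dual LP solutions; hence the optimistic core of every linear bottleneck game is nonempty.) -/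
/-- core inequality for linear bottleneck games under the
optimistic arbitration function. -/
theorem lbg_optimistic_core_inequality
    (n m : ℕ)
    (W : Fin n → ℝ) (A : Fin m → Finset (Fin n)) (π : Fin m → ℝ)
    -- (W, A, π) is a linear bottleneck game:
    (hW : ∀ i, 0 ≤ W i)
    (hAinj : Function.Injective A)
    (hAne : ∀ j, (A j).Nonempty)
    (hπ : ∀ j, 0 ≤ π j)
    (hsingle : ∀ i : Fin n, ∃ j : Fin m, A j = {i})
    -- c is primal-feasible:
    (c : Fin m → ℝ)
    (hc0 : ∀ j, 0 ≤ c j)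
    (hcfeas : ∀ i, ∑ j ∈ Finset.univ.filter (fun j => i ∈ A j), c j ≤ W i)
    -- γ is dual-feasible:
    (γ : Fin n → ℝ)
    (hγ0 : ∀ i, 0 ≤ γ i)
    (hγfeas : ∀ j, π j ≤ ∑ i ∈ A j, γ i)
    -- equal objective values:
    (hopt : ∑ j, c j * π j = ∑ i, W i * γ i)
    -- deviating set, abandoned tasks, withdrawal amounts:
    (S : Finset (Fin n)) (D : Finset (Fin m))
    (z : Fin m → ℝ)
    (hz : ∀ j ∉ D, 0 ≤ z j ∧ z j ≤ c j)
    -- ν and Z: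
    (ν Z : Fin n → ℝ)
    (hν : ∀ i, ν i = ∑ j ∈ D.filter (fun j => i ∈ A j), c j)
    (hZ : ∀ i, Z i = ∑ j ∈ Dᶜ.filter (fun j => i ∈ A j), z j)
    -- c' is a feasible allocation for the deviating set:
    (c' : Fin m → ℝ)
    (hc'0 : ∀ j, 0 ≤ c' j)
    (hc'S : ∀ j, ¬ A j ⊆ S → c' j = 0)
    (hc'feas : ∀ i ∈ S, ∑ j ∈ Finset.univ.filter (fun j => i ∈ A j), c' j ≤ ν i + Z i) :
    ∑ j, c' j * π j - ∑ j ∈ Dᶜ, z j * π j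
      ≤ ∑ i ∈ S, γ i * ∑ j ∈ Finset.univ.filter (fun j => i ∈ A j), c j := by
  have hzπ : 0 ≤ ∑ j ∈ Dᶜ, z j * π j := by
    refine Finset.sum_nonneg fun j hj => ?_
    exact mul_nonneg (hz j (Finset.mem_compl.mp hj)).1 (hπ j)
  have swap : ∀ f : Fin m → ℝ, (∑ j, f j * ∑ i ∈ A j, γ i)
      = ∑ i, γ i * ∑ j ∈ Finset.univ.filter (fun j => i ∈ A j), f j := by
    intro f
    have : ∀ j : Fin m, f j * ∑ i ∈ A j, γ i
        = ∑ i, if i ∈ A j then γ i * f j else 0 := by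
      intro j
      rw [Finset.mul_sum, ← Finset.sum_filter]
      have : Finset.univ.filter (fun i => i ∈ A j) = A j := by
        ext i; simp
      rw [this]
      exact Finset.sum_congr rfl fun i _ => mul_comm _ _
    simp_rw [this]
    rw [Finset.sum_comm]
    refine Finset.sum_congr rfl fun i _ => ?_
    rw [Finset.mul_sum, ← Finset.sum_filter]
  have step1 : ∑ j, c' j * π j ≤ ∑ j, c' j * ∑ i ∈ A j, γ i :=
    Finset.sum_le_sum fun j _ => mul_le_mul_of_nonneg_left (hγfeas j) (hc'0 j)
  have step2 : (∑ i, γ i * ∑ j ∈ Finset.univ.filter (fun j => i ∈ A j), c' j)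
      = ∑ i ∈ S, γ i * ∑ j ∈ Finset.univ.filter (fun j => i ∈ A j), c' j := by
    symm
    refine Finset.sum_subset (Finset.subset_univ S) fun i _ hiS => ?_
    have : ∑ j ∈ Finset.univ.filter (fun j => i ∈ A j), c' j = 0 := by
      refine Finset.sum_eq_zero fun j hj => ?_
      refine hc'S j fun hsub => hiS (hsub (Finset.mem_filter.mp hj).2)
    rw [this, mul_zero]
  have key : ∀ i, ν i + Z i ≤ ∑ j ∈ Finset.univ.filter (fun j => i ∈ A j), c j := by
    intro i
    have hsplit : (∑ j ∈ Finset.univ.filter (fun j => i ∈ A j), c j)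
        = (∑ j ∈ D.filter (fun j => i ∈ A j), c j)
          + ∑ j ∈ Dᶜ.filter (fun j => i ∈ A j), c j := by
      rw [← Finset.sum_union (Finset.disjoint_filter_filter
        (disjoint_compl_right))]
      congr 1
      rw [← Finset.filter_union, Finset.union_compl]
    have hzc : (∑ j ∈ Dᶜ.filter (fun j => i ∈ A j), z j)
        ≤ ∑ j ∈ Dᶜ.filter (fun j => i ∈ A j), c j := by
      refine Finset.sum_le_sum fun j hj => ?_
      exact (hz j (Finset.mem_compl.mp (Finset.mem_filter.mp hj).1)).2
    rw [hν, hZ, hsplit]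
    linarith
  have step3 : (∑ i ∈ S, γ i * ∑ j ∈ Finset.univ.filter (fun j => i ∈ A j), c' j)
      ≤ ∑ i ∈ S, γ i * ∑ j ∈ Finset.univ.filter (fun j => i ∈ A j), c j := by
    refine Finset.sum_le_sum fun i hi => ?_
    exact mul_le_mul_of_nonneg_left ((hc'feas i hi).trans (key i)) (hγ0 i)
  calc ∑ j, c' j * π j - ∑ j ∈ Dᶜ, z j * π j
      ≤ ∑ j, c' j * π j := by linarith
    _ ≤ ∑ j, c' j * ∑ i ∈ A j, γ i := step1
    _ = ∑ i ∈ S, γ i * ∑ j ∈ Finset.univ.filter (fun j => i ∈ A j), c' j := by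
        rw [swap, step2]
    _ ≤ _ := step3
end

section
/- For every linear bottleneck game (W, A, π), the optimal coalition-structure value equals the optimum of the associated linear program: v*(W) = sup { Σ_j c_j·π_j : c is primal-feasible }. (Equivalently, there is an optimal coalition structure in which each coalition gives equal contributions to all its members, every agent uses all of its weight, and each task forms at most one coalition.) -/
-- The characteristic function of a linear bottleneck game: a coalition `d`
-- (a nonnegative vector of contributions) earns `π j` times its smallest
-- contribution if its support is exactly `A j` for some task `j`, and `0`
-- otherwise.
open Classical in
noncomputable def lbgChar (n m : ℕ) (A : Fin m → Finset (Fin n)) (π : Fin m → ℝ)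
    (d : Fin n → ℝ) : ℝ :=
  if h : ∃ j : Fin m, {i : Fin n | 0 < d i} = ↑(A j) then
    π h.choose * sInf (d '' ↑(A h.choose))
  else 0

/-- The superadditive-cover value of a weight vector `W` in the LBG: the
supremum of the values of coalition structures (finite multisets of nonzero
nonnegative vectors summing to `W`). -/
noncomputable def lbgVStar (n m : ℕ) (A : Fin m → Finset (Fin n)) (π : Fin m → ℝ)
    (W : Fin n → ℝ) : ℝ :=
  sSup {x : ℝ | ∃ CS : Multiset (Fin n → ℝ),
    (∀ d ∈ CS, d ≠ 0 ∧ ∀ i, 0 ≤ d i) ∧ CS.sum = W ∧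
    x = (CS.map (lbgChar n m A π)).sum}

/-!
A coalition whose support is exactly `A j` is worth `π j` times its bottleneck, the smallest
contribution in it, and each member contributes at least that bottleneck. Summing the
bottlenecks task by task therefore turns a coalition structure into an LP-feasible `c` of the
same value. Conversely, a feasible `c` becomes tight once every agent's slack is put on its
singleton task, which cannot lower the value since `π ≥ 0`; a tight `c` is realised by one
coalition per task in which every member contributes `c j`.
-/

open Finset

variable {n m : ℕ} {A : Fin m → Finset (Fin n)}

open Classical in
noncomputable def bottleneckLevel (A : Fin m → Finset (Fin n)) (d : Fin n → ℝ) (j : Fin m) :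
    ℝ :=
  if {i : Fin n | 0 < d i} = ↑(A j) then sInf (d '' ↑(A j)) else 0

def uniformCoalition (A : Fin m → Finset (Fin n)) (j : Fin m) (t : ℝ) : Fin n → ℝ :=
  fun i => if i ∈ A j then t else 0

section Bottleneck

variable {d : Fin n → ℝ}

theorem lbgChar_of_support_eq (hAinj : Function.Injective A) (π : Fin m → ℝ) {j : Fin m}
    (h : {i : Fin n | 0 < d i} = ↑(A j)) : lbgChar n m A π d = π j * sInf (d '' ↑(A j)) := by
  have hex : ∃ j', {i : Fin n | 0 < d i} = ↑(A j') := ⟨j, h⟩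
  have hchoose : hex.choose = j := hAinj (coe_injective (hex.choose_spec.symm.trans h))
  rw [lbgChar, dif_pos hex, hchoose]

theorem lbgChar_of_forall_support_ne (π : Fin m → ℝ)
    (h : ∀ j, {i : Fin n | 0 < d i} ≠ ↑(A j)) : lbgChar n m A π d = 0 := by
  rw [lbgChar, dif_neg (not_exists.2 h)]

theorem bottleneckLevel_of_support_eq (hAinj : Function.Injective A) {j₀ : Fin m}
    (h : {i : Fin n | 0 < d i} = ↑(A j₀)) (j : Fin m) :
    bottleneckLevel A d j = if j = j₀ then sInf (d '' ↑(A j₀)) else 0 := by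
  by_cases hj : j = j₀
  · subst hj
    exact (if_pos h).trans (if_pos rfl).symm
  · rw [if_neg hj, bottleneckLevel, if_neg]
    exact fun h' => hj (hAinj (coe_injective (h'.symm.trans h)))

theorem bottleneckLevel_of_forall_support_ne (h : ∀ j, {i : Fin n | 0 < d i} ≠ ↑(A j))
    (j : Fin m) : bottleneckLevel A d j = 0 :=
  if_neg (h j)

theorem bottleneckLevel_nonneg (hd : ∀ i, 0 ≤ d i) (j : Fin m) : 0 ≤ bottleneckLevel A d j := by
  unfold bottleneckLevel
  split_ifs
  · exact Real.sInf_nonneg (by rintro _ ⟨i, -, rfl⟩; exact hd i)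
  · exact le_rfl

theorem lbgChar_eq_sum_bottleneckLevel (hAinj : Function.Injective A) (π : Fin m → ℝ)
    (d : Fin n → ℝ) : lbgChar n m A π d = ∑ j, bottleneckLevel A d j * π j := by
  by_cases h : ∃ j₀, {i : Fin n | 0 < d i} = ↑(A j₀)
  · obtain ⟨j₀, hj₀⟩ := h
    simp [lbgChar_of_support_eq hAinj π hj₀, bottleneckLevel_of_support_eq hAinj hj₀, mul_comm]
  · simp [lbgChar_of_forall_support_ne π (not_exists.1 h),
      bottleneckLevel_of_forall_support_ne (not_exists.1 h)]

theorem sum_bottleneckLevel_le (hAinj : Function.Injective A) (hd : ∀ i, 0 ≤ d i) (i : Fin n) :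
    ∑ j ∈ univ.filter (fun j => i ∈ A j), bottleneckLevel A d j ≤ d i := by
  by_cases h : ∃ j₀, {i : Fin n | 0 < d i} = ↑(A j₀)
  · obtain ⟨j₀, hj₀⟩ := h
    simp only [bottleneckLevel_of_support_eq hAinj hj₀, sum_ite_eq', mem_filter, mem_univ,
      true_and]
    split_ifs with hi
    · exact csInf_le (Set.toFinite _).bddBelow ⟨i, hi, rfl⟩
    · exact hd i
  · simp [bottleneckLevel_of_forall_support_ne (not_exists.1 h), hd i]

end Bottleneck

theorem exists_lpFeasible_of_coalitionStructure (hAinj : Function.Injective A) (π : Fin m → ℝ)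
    {W : Fin n → ℝ} {CS : Multiset (Fin n → ℝ)} (hCS : ∀ d ∈ CS, ∀ i, 0 ≤ d i)
    (hsum : CS.sum = W) :
    ∃ c : Fin m → ℝ, (∀ j, 0 ≤ c j) ∧
      (∀ i, ∑ j ∈ univ.filter (fun j => i ∈ A j), c j ≤ W i) ∧
      (CS.map (lbgChar n m A π)).sum = ∑ j, c j * π j := by
  refine ⟨fun j => (CS.map (bottleneckLevel A · j)).sum, fun j => ?_, fun i => ?_, ?_⟩
  · exact Multiset.sum_nonneg (by
      rintro _ hx
      obtain ⟨d, hd, rfl⟩ := Multiset.mem_map.1 hx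
      exact bottleneckLevel_nonneg (hCS d hd) j)
  · calc ∑ j ∈ univ.filter (fun j => i ∈ A j), (CS.map (bottleneckLevel A · j)).sum
        = (CS.map fun d => ∑ j ∈ univ.filter (fun j => i ∈ A j), bottleneckLevel A d j).sum :=
          Multiset.sum_map_sum.symm
      _ ≤ (CS.map fun d => d i).sum :=
          Multiset.sum_map_le_sum_map _ _ fun d hd => sum_bottleneckLevel_le hAinj (hCS d hd) i
      _ = W i := by rw [← hsum, Pi.multiset_sum_apply]
  · simp only [lbgChar_eq_sum_bottleneckLevel hAinj π, Multiset.sum_map_sum,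
      Multiset.sum_map_mul_right]

theorem lbgChar_uniformCoalition (hAinj : Function.Injective A) (π : Fin m → ℝ) {j : Fin m}
    (hAj : (A j).Nonempty) {t : ℝ} (ht : 0 < t) :
    lbgChar n m A π (uniformCoalition A j t) = π j * t := by
  have hsupp : {i : Fin n | 0 < uniformCoalition A j t i} = ↑(A j) := by
    ext i
    by_cases hi : i ∈ A j <;> simp [uniformCoalition, hi, ht]
  have himage : uniformCoalition A j t '' ↑(A j) = {t} := by
    rw [Set.EqOn.image_eq (f₁ := uniformCoalition A j t) (f₂ := fun _ => t)
      fun i hi => if_pos hi, (coe_nonempty.2 hAj).image_const]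
  rw [lbgChar_of_support_eq hAinj π hsupp, himage, csInf_singleton]

theorem exists_coalitionStructure_of_tight (hAinj : Function.Injective A)
    (hAne : ∀ j, (A j).Nonempty) (π : Fin m → ℝ) {W : Fin n → ℝ} {e : Fin m → ℝ}
    (he : ∀ j, 0 ≤ e j) (htight : ∀ i, ∑ j ∈ univ.filter (fun j => i ∈ A j), e j = W i) :
    ∃ CS : Multiset (Fin n → ℝ), (∀ d ∈ CS, d ≠ 0 ∧ ∀ i, 0 ≤ d i) ∧ CS.sum = W ∧
      (CS.map (lbgChar n m A π)).sum = ∑ j, e j * π j := by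
  have hpos : ∀ j ∈ univ.filter (fun j => e j ≠ 0), 0 < e j :=
    fun j hj => (he j).lt_of_ne' (mem_filter.1 hj).2
  refine ⟨(univ.filter (fun j => e j ≠ 0)).val.map fun j => uniformCoalition A j (e j),
    ?_, ?_, ?_⟩
  · simp only [Multiset.mem_map, mem_val]
    rintro _ ⟨j, hj, rfl⟩
    obtain ⟨i, hi⟩ := hAne j
    refine ⟨fun h => (hpos j hj).ne' ?_, fun i' => ?_⟩
    · simpa [uniformCoalition, hi] using congrFun h i
    · unfold uniformCoalition
      split_ifs
      exacts [he j, le_rfl]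
  · ext i
    change (∑ j ∈ univ.filter (fun j => e j ≠ 0), uniformCoalition A j (e j)) i = W i
    rw [Finset.sum_apply, ← htight i, sum_filter (fun j => i ∈ A j)]
    exact sum_filter_of_ne fun j _ hj => (by simpa [uniformCoalition] using hj : _ ∧ _).2
  · rw [Multiset.map_map]
    change ∑ j ∈ univ.filter (fun j => e j ≠ 0), lbgChar n m A π (uniformCoalition A j (e j)) = _
    rw [sum_congr rfl fun j hj => lbgChar_uniformCoalition hAinj π (hAne j) (hpos j hj)]
    simp only [mul_comm (π _)]
    exact sum_filter_of_ne fun j _ hj => left_ne_zero_of_mul hj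

theorem exists_tight_ge_of_lpFeasible {π : Fin m → ℝ} (hπ : ∀ j, 0 ≤ π j)
    (hsingle : ∀ i : Fin n, ∃ j : Fin m, A j = {i}) {W : Fin n → ℝ} {c : Fin m → ℝ}
    (hc : ∀ j, 0 ≤ c j) (hfeas : ∀ i, ∑ j ∈ univ.filter (fun j => i ∈ A j), c j ≤ W i) :
    ∃ e : Fin m → ℝ, (∀ j, 0 ≤ e j) ∧
      (∀ i, ∑ j ∈ univ.filter (fun j => i ∈ A j), e j = W i) ∧
      ∑ j, c j * π j ≤ ∑ j, e j * π j := by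
  choose s hs using hsingle
  set slack : Fin n → ℝ := fun i => W i - ∑ j ∈ univ.filter (fun j => i ∈ A j), c j
  set extra : Fin m → ℝ := ∑ i, Pi.single (s i) (slack i)
  have hextra : 0 ≤ extra := sum_nonneg fun i _ => Pi.single_nonneg.2 (sub_nonneg.2 (hfeas i))
  have hextra_at : ∀ i, ∑ j ∈ univ.filter (fun j => i ∈ A j), extra j = slack i := by
    intro i
    simp only [extra, Finset.sum_apply]
    rw [sum_comm]
    simp [sum_pi_single', hs]
  refine ⟨c + extra, fun j => add_nonneg (hc j) (hextra j), fun i => ?_, ?_⟩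
  · simp only [Pi.add_apply, sum_add_distrib, hextra_at, slack]
    ring
  · simp only [Pi.add_apply, add_mul, sum_add_distrib]
    exact le_add_of_nonneg_right (sum_nonneg fun j _ => mul_nonneg (hextra j) (hπ j))

theorem lbg_optimal_value_eq_lp_value_general
    (n m : ℕ)
    (W : Fin n → ℝ) (A : Fin m → Finset (Fin n)) (π : Fin m → ℝ)
    -- (W, A, π) is a linear bottleneck game:
    (hAinj : Function.Injective A)
    (hAne : ∀ j, (A j).Nonempty)
    (hπ : ∀ j, 0 ≤ π j)
    (hsingle : ∀ i : Fin n, ∃ j : Fin m, A j = {i}) :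
    lbgVStar n m A π W =
      sSup {x : ℝ | ∃ c : Fin m → ℝ,
        (∀ j, 0 ≤ c j) ∧
        (∀ i, ∑ j ∈ Finset.univ.filter (fun j => i ∈ A j), c j ≤ W i) ∧
        x = ∑ j, c j * π j} := by
  refine csSup_eq_csSup_of_forall_exists_le ?_ ?_
  · rintro _ ⟨CS, hCS, hsum, rfl⟩
    obtain ⟨c, hc, hfeas, hval⟩ :=
      exists_lpFeasible_of_coalitionStructure hAinj π (fun d hd => (hCS d hd).2) hsum
    exact ⟨_, ⟨c, hc, hfeas, rfl⟩, hval.le⟩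
  · rintro _ ⟨c, hc, hfeas, rfl⟩
    obtain ⟨e, he, htight, hle⟩ := exists_tight_ge_of_lpFeasible hπ hsingle hc hfeas
    obtain ⟨CS, hCS, hsum, hval⟩ := exists_coalitionStructure_of_tight hAinj hAne π he htight
    exact ⟨_, ⟨CS, hCS, hsum, rfl⟩, hle.trans hval.ge⟩

/-- for every linear bottleneck game, the optimal
coalition-structure value equals the optimum of the associated linear
program. -/
theorem lbg_optimal_value_eq_lp_value
    (n m : ℕ)
    (W : Fin n → ℝ) (A : Fin m → Finset (Fin n)) (π : Fin m → ℝ)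
    -- (W, A, π) is a linear bottleneck game:
    (hW : ∀ i, 0 ≤ W i)
    (hAinj : Function.Injective A)
    (hAne : ∀ j, (A j).Nonempty)
    (hπ : ∀ j, 0 ≤ π j)
    (hsingle : ∀ i : Fin n, ∃ j : Fin m, A j = {i}) :
    lbgVStar n m A π W =
      sSup {x : ℝ | ∃ c : Fin m → ℝ,
        (∀ j, 0 ≤ c j) ∧
        (∀ i, ∑ j ∈ Finset.univ.filter (fun j => i ∈ A j), c j ≤ W i) ∧
        x = ∑ j, c j * π j} :=
  lbg_optimal_value_eq_lp_value_general n m W A π hAinj hAne hπ hsingle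
end

section
/- (Individual rationality of the dual-based payoffs.) Let (W, A, π) be a linear bottleneck game, let c be primal-feasible and γ be dual-feasible with Σ_j c_j·π_j = Σ_i W_i·γ_i. Then for every agent i and every task j₀ with A j₀ = {i}, the total payoff of agent i under the payoff division x_j^i = γ_i·c_j satisfies γ_i·(Σ_{j : i ∈ A j} c_j) ≥ π_{j₀}·W_i; that is, each agent receives at least what it can earn working alone. -/
/-- individual rationality of the dual-based payoff division in
linear bottleneck games. -/
theorem lbg_individual_rationality
    (n m : ℕ)
    (W : Fin n → ℝ) (A : Fin m → Finset (Fin n)) (π : Fin m → ℝ)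
    -- (W, A, π) is a linear bottleneck game:
    (hW : ∀ i, 0 ≤ W i)
    (hAinj : Function.Injective A)
    (hAne : ∀ j, (A j).Nonempty)
    (hπ : ∀ j, 0 ≤ π j)
    (hsingle : ∀ i : Fin n, ∃ j : Fin m, A j = {i})
    -- c is primal-feasible:
    (c : Fin m → ℝ)
    (hc0 : ∀ j, 0 ≤ c j)
    (hcfeas : ∀ i, ∑ j ∈ Finset.univ.filter (fun j => i ∈ A j), c j ≤ W i)
    -- γ is dual-feasible:
    (γ : Fin n → ℝ)
    (hγ0 : ∀ i, 0 ≤ γ i)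
    (hγfeas : ∀ j, π j ≤ ∑ i ∈ A j, γ i)
    -- equal objective values:
    (hopt : ∑ j, c j * π j = ∑ i, W i * γ i) :
    ∀ i : Fin n, ∀ j₀ : Fin m, A j₀ = {i} →
      π j₀ * W i ≤ γ i * ∑ j ∈ Finset.univ.filter (fun j => i ∈ A j), c j := by
  intro i j₀ hj₀
  set S : Fin n → ℝ := fun i => ∑ j ∈ Finset.univ.filter (fun j => i ∈ A j), c j with hS
  -- exchange of summation
  have hswap : ∑ j, c j * ∑ i ∈ A j, γ i = ∑ i, γ i * S i := by
    have : ∑ j, c j * ∑ i ∈ A j, γ i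
        = ∑ j : Fin m, ∑ i : Fin n, if i ∈ A j then c j * γ i else 0 := by
      refine Finset.sum_congr rfl fun j _ => ?_
      rw [Finset.mul_sum, ← Finset.sum_filter]
      refine Finset.sum_congr ?_ fun _ _ => rfl
      ext x; simp
    rw [this, Finset.sum_comm]
    refine Finset.sum_congr rfl fun i _ => ?_
    rw [hS, Finset.mul_sum, Finset.sum_filter]
    refine Finset.sum_congr rfl fun j _ => ?_
    by_cases h : i ∈ A j <;> simp [h, mul_comm]
  have h1 : ∑ j, c j * π j ≤ ∑ i, γ i * S i := by
    rw [← hswap]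
    exact Finset.sum_le_sum fun j _ => mul_le_mul_of_nonneg_left (hγfeas j) (hc0 j)
  have h2 : ∀ k ∈ Finset.univ, γ k * S k ≤ γ k * W k :=
    fun k _ => mul_le_mul_of_nonneg_left (hcfeas k) (hγ0 k)
  have h3 : ∑ i, γ i * S i = ∑ i, γ i * W i := by
    have hWγ : ∑ i, W i * γ i = ∑ i, γ i * W i := by
      refine Finset.sum_congr rfl fun _ _ => mul_comm _ _
    have hle : ∑ i, γ i * S i ≤ ∑ i, γ i * W i := Finset.sum_le_sum h2
    have hge : ∑ i, γ i * W i ≤ ∑ i, γ i * S i := by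
      rw [← hWγ, ← hopt]; exact h1
    linarith
  have htight : γ i * S i = γ i * W i :=
    (Finset.sum_eq_sum_iff_of_le h2).1 h3 i (Finset.mem_univ i)
  have hγi : π j₀ ≤ γ i := by
    have := hγfeas j₀
    rwa [hj₀, Finset.sum_singleton] at this
  calc π j₀ * W i ≤ γ i * W i := mul_le_mul_of_nonneg_right hγi (hW i)
    _ = γ i * S i := htight.symm
end

section
/- (Decomposition of the optimal value over graph components.) Let v be the characteristic function of a discrete OCF game on n agents, let Γ be a simple graph on Fin n, and let (v|_Γ)* be the superadditive cover of the game reduced to Γ. If c₁, c₂ : Fin n → ℕ have disjoint supports and no edge of Γ joins a vertex of supp(c₁) to a vertex of supp(c₂), then (v|_Γ)*(c₁ + c₂) = (v|_Γ)*(c₁) + (v|_Γ)*(c₂). -/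
/-- The superadditive cover of a characteristic function `v` of a discrete OCF
game: `vStar v c` is the supremum of the values of coalition structures of
weight `c` (finite multisets of nonzero vectors summing to `c`). -/
noncomputable def vStar {α : Type*} (v : (α → ℕ) → ℝ) (c : α → ℕ) : ℝ :=
  sSup {x : ℝ | ∃ CS : Multiset (α → ℕ),
    (∀ d ∈ CS, d ≠ 0) ∧ CS.sum = c ∧ x = (CS.map v).sum}

-- The game reduced to a simple graph `Γ`: a coalition keeps its value if the
-- subgraph of `Γ` induced on its support is connected, and earns `0` otherwise.
open Classical in
noncomputable def vReduced (n : ℕ) (Γ : SimpleGraph (Fin n))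
    (v : (Fin n → ℕ) → ℝ) (c : Fin n → ℕ) : ℝ :=
  if (Γ.induce {i : Fin n | 0 < c i}).Connected then v c else 0

section Aux

variable {n : ℕ} {Γ : SimpleGraph (Fin n)} {v : (Fin n → ℕ) → ℝ}

lemma vReduced_nonneg (hv0 : ∀ c, 0 ≤ v c) (c : Fin n → ℕ) :
    0 ≤ vReduced n Γ v c := by
  unfold vReduced; split
  · exact hv0 c
  · exact le_refl 0

lemma vReduced_zero : vReduced n Γ v 0 = 0 := by
  unfold vReduced
  rw [if_neg]
  intro h
  obtain ⟨⟨i, hi⟩⟩ := h.nonempty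
  simp at hi

/-- Evaluation of a multiset sum of functions at a point. -/
lemma multiset_sum_apply {α : Type*} (CS : Multiset (α → ℕ)) (i : α) :
    CS.sum i = (CS.map (fun d => d i)).sum := by
  induction CS using Multiset.induction with
  | empty => simp
  | cons d CS ih => simp [ih]

lemma multiset_map_finsum (CS : Multiset (Fin n → ℕ)) :
    (CS.map fun d => ∑ i, d i).sum = ∑ i, CS.sum i := by
  induction CS using Multiset.induction with
  | empty => simp
  | cons d CS ih => simp [ih, Finset.sum_add_distrib]

lemma multiset_sum_map_add {β : Type*} (CS : Multiset β) (f g : β → ℝ) :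
    (CS.map fun d => f d + g d).sum = (CS.map f).sum + (CS.map g).sum := by
  induction CS using Multiset.induction with
  | empty => simp
  | cons d CS ih =>
    simp only [Multiset.map_cons, Multiset.sum_cons, ih]; ring

/-- If two vertices are reachable and a predicate holds at one but not the
other, there is a crossing edge. -/
lemma exists_crossing_edge {V : Type*} {G : SimpleGraph V} {P : V → Prop}
    {a b : V} (h : G.Reachable a b) (ha : P a) (hb : ¬ P b) :
    ∃ x y, G.Adj x y ∧ P x ∧ ¬ P y := by
  classical
  obtain ⟨w⟩ := h
  induction w with
  | nil => exact absurd ha hb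
  | @cons x y z hxy p ih =>
    by_cases hy : P y
    · exact ih hy hb
    · exact ⟨x, y, hxy, ha, hy⟩

/-- Nonemptiness of the set of achievable values. -/
lemma S_nonempty (w : (Fin n → ℕ) → ℝ) (c : Fin n → ℕ) :
    Set.Nonempty {x : ℝ | ∃ CS : Multiset (Fin n → ℕ),
      (∀ d ∈ CS, d ≠ 0) ∧ CS.sum = c ∧ x = (CS.map w).sum} := by
  by_cases hc : c = 0
  · exact ⟨0, 0, by simp, by simp [hc], by simp⟩
  · exact ⟨w c, {c}, by simpa using hc, by simp, by simp⟩

/-- Boundedness of the set of achievable values. -/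
lemma S_bddAbove (hv0 : ∀ c, 0 ≤ v c) (c : Fin n → ℕ) :
    BddAbove {x : ℝ | ∃ CS : Multiset (Fin n → ℕ),
      (∀ d ∈ CS, d ≠ 0) ∧ CS.sum = c ∧ x = (CS.map (vReduced n Γ v)).sum} := by
  classical
  set w := vReduced n Γ v with hw
  set F : Finset (Fin n → ℕ) := Fintype.piFinset (fun i => Finset.range (c i + 1)) with hF
  have hF0 : (0 : Fin n → ℕ) ∈ F := by
    simp [hF]
  set B : ℝ := F.sup' ⟨0, hF0⟩ w with hB
  refine ⟨(∑ i, c i) * B, ?_⟩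
  rintro x ⟨CS, hne, hsum, rfl⟩
  have hmem : ∀ d ∈ CS, d ≤ c := by
    intro d hd
    have := Multiset.single_le_sum (fun x _ => by positivity) d hd
    rwa [hsum] at this
  have hBd : ∀ d ∈ CS, w d ≤ B := by
    intro d hd
    apply Finset.le_sup'
    simp only [hF, Fintype.mem_piFinset]
    intro i
    simp only [Finset.mem_range]
    exact Nat.lt_succ_of_le (hmem d hd i)
  have hB0 : 0 ≤ B := le_trans (vReduced_nonneg hv0 0) (Finset.le_sup' _ hF0)
  have hcard : Multiset.card CS ≤ ∑ i, c i := by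
    have h1 : ∀ d ∈ CS, 1 ≤ ∑ i, d i := by
      intro d hd
      rw [Nat.one_le_iff_ne_zero]
      intro h0
      have := Finset.sum_eq_zero_iff.mp h0
      exact hne d hd (funext fun i => this i (Finset.mem_univ i))
    calc Multiset.card CS = (CS.map (fun _ => 1)).sum := by simp
      _ ≤ (CS.map (fun d => ∑ i, d i)).sum :=
          Multiset.sum_map_le_sum_map _ _ h1
      _ = ∑ i, CS.sum i := multiset_map_finsum CS
      _ = ∑ i, c i := by rw [hsum]
  calc (CS.map w).sum ≤ Multiset.card (CS.map w) • B :=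
        Multiset.sum_le_card_nsmul _ _ (by
          intro x hx
          obtain ⟨d, hd, rfl⟩ := Multiset.mem_map.mp hx
          exact hBd d hd)
    _ = (Multiset.card CS : ℝ) * B := by simp [nsmul_eq_mul]
    _ ≤ (∑ i, c i) * B := by
        apply mul_le_mul_of_nonneg_right _ hB0
        exact_mod_cast hcard

end Aux

/-- decomposition of the optimal value over graph components:
if `c₁` and `c₂` have disjoint supports not joined by any edge of `Γ`, then the
superadditive cover of the reduced game is additive on `c₁ + c₂`. -/
theorem vStar_graph_decomposition
    (n : ℕ) (v : (Fin n → ℕ) → ℝ)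
    (hv0 : ∀ c, 0 ≤ v c) (hvzero : v 0 = 0)
    (Γ : SimpleGraph (Fin n))
    (c₁ c₂ : Fin n → ℕ)
    (hdisj : Disjoint {i : Fin n | 0 < c₁ i} {i : Fin n | 0 < c₂ i})
    (hnoedge : ∀ i j : Fin n, 0 < c₁ i → 0 < c₂ j → ¬ Γ.Adj i j) :
    vStar (vReduced n Γ v) (c₁ + c₂) =
      vStar (vReduced n Γ v) c₁ + vStar (vReduced n Γ v) c₂ := by
  classical
  set w := vReduced n Γ v with hw
  set S : (Fin n → ℕ) → Set ℝ := fun c => {x : ℝ | ∃ CS : Multiset (Fin n → ℕ),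
    (∀ d ∈ CS, d ≠ 0) ∧ CS.sum = c ∧ x = (CS.map w).sum} with hS
  have hne : ∀ c, (S c).Nonempty := S_nonempty w
  have hbdd : ∀ c, BddAbove (S c) := fun c => S_bddAbove hv0 c
  have hw0 : ∀ d, 0 ≤ w d := vReduced_nonneg hv0
  have hwz : w 0 = 0 := by rw [hw]; exact vReduced_zero
  set r₁ : (Fin n → ℕ) → (Fin n → ℕ) := fun d i => if 0 < c₁ i then d i else 0 with hr₁
  set r₂ : (Fin n → ℕ) → (Fin n → ℕ) := fun d i => if 0 < c₁ i then 0 else d i with hr₂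
  have hmain : vStar w (c₁ + c₂) = sSup (S (c₁ + c₂)) := rfl
  have hmain₁ : vStar w c₁ = sSup (S c₁) := rfl
  have hmain₂ : vStar w c₂ = sSup (S c₂) := rfl
  rw [hmain, hmain₁, hmain₂]
  apply le_antisymm
  · -- ≤ : split each coalition structure
    apply csSup_le (hne _)
    rintro x ⟨CS, hne0, hsum, rfl⟩
    have hle : ∀ d ∈ CS, d ≤ c₁ + c₂ := by
      intro d hd
      have := Multiset.single_le_sum (fun x _ => by positivity) d hd
      rwa [hsum] at this
    have hkey : ∀ d ∈ CS, w d ≤ w (r₁ d) + w (r₂ d) := by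
      intro d hd
      by_cases hconn : (Γ.induce {i : Fin n | 0 < d i}).Connected
      · by_cases hex : ∃ i, 0 < d i ∧ 0 < c₁ i
        · obtain ⟨i, hdi, hci⟩ := hex
          have hall : ∀ j, 0 < d j → 0 < c₁ j := by
            intro j hdj
            by_contra hcj
            have hreach := hconn.preconnected ⟨i, hdi⟩ ⟨j, hdj⟩
            obtain ⟨⟨x, hx⟩, ⟨y, hy⟩, hadj, hPx, hPy⟩ :=
              exists_crossing_edge
                (P := fun z : {i : Fin n | 0 < d i} => 0 < c₁ z.1) hreach hci hcj
            have hPx' : 0 < c₁ x := hPx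
            have hPy' : ¬ 0 < c₁ y := hPy
            have hy' : 0 < d y := hy
            have hyle : d y ≤ c₁ y + c₂ y := by
              have := hle d hd y; simpa using this
            have hy2 : 0 < c₂ y := by omega
            have hadj' : Γ.Adj x y := hadj
            exact hnoedge x y hPx' hy2 hadj'
          have h1 : r₁ d = d := by
            funext j
            simp only [hr₁]
            by_cases h : 0 < c₁ j
            · simp [h]
            · have : d j = 0 := by
                by_contra h2; exact h (hall j (Nat.pos_of_ne_zero h2))
              simp [h, this]
          have h2 : r₂ d = 0 := by
            funext j
            simp only [hr₂, Pi.zero_apply]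
            by_cases h : 0 < c₁ j
            · simp [h]
            · have : d j = 0 := by
                by_contra h2; exact h (hall j (Nat.pos_of_ne_zero h2))
              simp [h, this]
          rw [h1, h2, hwz]
          simp
        · push_neg at hex
          have h1 : r₁ d = 0 := by
            funext j
            simp only [hr₁, Pi.zero_apply]
            by_cases h : 0 < c₁ j
            · have := hex j
              simp only [h, if_true]
              omega
            · simp [h]
          have h2 : r₂ d = d := by
            funext j
            simp only [hr₂]
            by_cases h : 0 < c₁ j
            · have := hex j
              simp only [h, if_true]
              omega
            · simp [h]
          rw [h1, h2, hwz]
          simp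
      · have hz : w d = 0 := by simp [hw, vReduced, hconn]
        rw [hz]
        exact add_nonneg (hw0 _) (hw0 _)
    set CS₁ : Multiset (Fin n → ℕ) := (CS.map r₁).filter (· ≠ 0) with hCS₁
    set CS₂ : Multiset (Fin n → ℕ) := (CS.map r₂).filter (· ≠ 0) with hCS₂
    have hfiltersum : ∀ (T : Multiset (Fin n → ℕ)),
        (T.filter (· ≠ 0)).sum = T.sum := by
      intro T
      conv_rhs => rw [← Multiset.filter_add_not (· ≠ 0) T]
      rw [Multiset.sum_add]
      have hzz : (T.filter (fun a => ¬ a ≠ 0)).sum = 0 :=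
        Multiset.sum_eq_zero (fun x hx => by
          have := Multiset.of_mem_filter hx
          simpa using this)
      rw [hzz, add_zero]
    have hfilterval : ∀ (T : Multiset (Fin n → ℕ)),
        ((T.filter (· ≠ 0)).map w).sum = (T.map w).sum := by
      intro T
      conv_rhs => rw [← Multiset.filter_add_not (· ≠ 0) T]
      rw [Multiset.map_add, Multiset.sum_add]
      have hzz : ((T.filter (fun a => ¬ a ≠ 0)).map w).sum = 0 :=
        Multiset.sum_eq_zero (fun x hx => by
          obtain ⟨d, hd, rfl⟩ := Multiset.mem_map.mp hx
          have := Multiset.of_mem_filter hd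
          simp only [ne_eq, not_not] at this
          rw [this, hwz])
      rw [hzz, add_zero]
    have hsum₁ : CS₁.sum = c₁ := by
      rw [hCS₁, hfiltersum]
      funext i
      rw [multiset_sum_apply, Multiset.map_map]
      by_cases hi : 0 < c₁ i
      · have h : ((CS.map (r₁ · i))).sum = CS.sum i := by
          rw [multiset_sum_apply]
          congr 1
          apply Multiset.map_congr rfl
          intro d hd
          simp [hr₁, hi]
        simp only [Function.comp] at h ⊢
        rw [h, hsum]
        have h2 : c₂ i = 0 := by
          by_contra h2
          exact Set.disjoint_left.mp hdisj hi (by simp; omega)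
        simp [h2]
      · have h : ((CS.map (r₁ · i))).sum = 0 := by
          apply Multiset.sum_eq_zero
          intro x hx
          obtain ⟨d, hd, rfl⟩ := Multiset.mem_map.mp hx
          simp [hr₁, hi]
        simp only [Function.comp] at h ⊢
        rw [h]
        omega
    have hsum₂ : CS₂.sum = c₂ := by
      rw [hCS₂, hfiltersum]
      funext i
      rw [multiset_sum_apply, Multiset.map_map]
      by_cases hi : 0 < c₁ i
      · have h : ((CS.map (r₂ · i))).sum = 0 := by
          apply Multiset.sum_eq_zero
          intro x hx
          obtain ⟨d, hd, rfl⟩ := Multiset.mem_map.mp hx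
          simp [hr₂, hi]
        simp only [Function.comp] at h ⊢
        rw [h]
        have h2 : c₂ i = 0 := by
          by_contra h2
          exact Set.disjoint_left.mp hdisj hi (by simp; omega)
        omega
      · have h : ((CS.map (r₂ · i))).sum = CS.sum i := by
          rw [multiset_sum_apply]
          congr 1
          apply Multiset.map_congr rfl
          intro d hd
          simp [hr₂, hi]
        simp only [Function.comp] at h ⊢
        rw [h, hsum]
        simp only [Pi.add_apply]
        omega
    have hmem₁ : ((CS₁.map w).sum : ℝ) ∈ S c₁ :=
      ⟨CS₁, fun d hd => by simpa using Multiset.of_mem_filter hd, hsum₁, rfl⟩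
    have hmem₂ : ((CS₂.map w).sum : ℝ) ∈ S c₂ :=
      ⟨CS₂, fun d hd => by simpa using Multiset.of_mem_filter hd, hsum₂, rfl⟩
    calc (CS.map w).sum ≤ (CS.map (fun d => w (r₁ d) + w (r₂ d))).sum :=
          Multiset.sum_map_le_sum_map _ _ hkey
      _ = (CS.map (fun d => w (r₁ d))).sum + (CS.map (fun d => w (r₂ d))).sum :=
          multiset_sum_map_add _ _ _
      _ = ((CS.map r₁).map w).sum + ((CS.map r₂).map w).sum := by
          simp [Multiset.map_map, Function.comp]
      _ = (CS₁.map w).sum + (CS₂.map w).sum := by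
          rw [hCS₁, hCS₂, hfilterval, hfilterval]
      _ ≤ sSup (S c₁) + sSup (S c₂) :=
          add_le_add (le_csSup (hbdd _) hmem₁) (le_csSup (hbdd _) hmem₂)
  · -- ≥ : combine coalition structures
    have hstep : ∀ y₁ ∈ S c₁, ∀ y₂ ∈ S c₂, y₁ + y₂ ≤ sSup (S (c₁ + c₂)) := by
      rintro y₁ ⟨CS₁, h1, h1s, rfl⟩ y₂ ⟨CS₂, h2, h2s, rfl⟩
      apply le_csSup (hbdd _)
      exact ⟨CS₁ + CS₂, fun d hd => by
          rcases Multiset.mem_add.mp hd with h | h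
          exacts [h1 d h, h2 d h],
        by rw [Multiset.sum_add, h1s, h2s],
        by rw [Multiset.map_add, Multiset.sum_add]⟩
    rw [← le_sub_iff_add_le]
    apply csSup_le (hne _)
    intro y₁ hy₁
    rw [le_sub_iff_add_le, add_comm, ← le_sub_iff_add_le]
    apply csSup_le (hne _)
    intro y₂ hy₂
    rw [le_sub_iff_add_le]
    have := hstep y₁ hy₁ y₂ hy₂
    linarith
end
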